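/- Let (a_L) be a sequence of nonnegative reals and c₁, c₂, c₃ ≥ 0 constants such that for all L, a_L ≤ c₁·sqrt(C/L + a_L²·sqrt(C/L) + c₂ a_L⁴) + c₃ a_L² for some C > 0, and suppose a_L → 0 as L → ∞. Then a_L = O(sqrt(C/L)). -/

import Mathlib

/-!
Bound the square root termwise: `√(C/L + a²√(C/L) + c₂a⁴) ≤ √(C/L) + a (C/L)^{1/4} + √c₂ a²`.
The hypothesis then reads `a ≤ c₁√(C/L) + e·a` with `e = c₁ (C/L)^{1/4} + (c₁√c₂ + c₃) a`, and
`e → 0` because `a → 0`. Once `e ≤ 1/2` the term `e·a` is absorbed into the left-hand side,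
leaving `a ≤ 2c₁√(C/L)`.
-/

open Filter Topology

/-- No sign conditions are needed since `√` vanishes on `(-∞, 0]`. -/
lemma Real.sqrt_add_le_add_sqrt (x y : ℝ) : √(x + y) ≤ √x + √y := by
  rcases le_total 0 x with hx | hx
  · rcases le_total 0 y with hy | hy
    · rw [Real.sqrt_le_iff]
      refine ⟨by positivity, ?_⟩
      nlinarith [Real.sq_sqrt hx, Real.sq_sqrt hy, Real.sqrt_nonneg x, Real.sqrt_nonneg y]
    · calc √(x + y) ≤ √x := Real.sqrt_le_sqrt (by linarith)
        _ ≤ √x + √y := le_add_of_nonneg_right (Real.sqrt_nonneg y)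
  · calc √(x + y) ≤ √y := Real.sqrt_le_sqrt (by linarith)
      _ ≤ √x + √y := le_add_of_nonneg_left (Real.sqrt_nonneg x)

lemma Real.sqrt_add_sq_mul_sqrt_add_mul_pow_four_le {a : ℝ} (ha : 0 ≤ a) (s c : ℝ) :
    √(s + a ^ 2 * √s + c * a ^ 4) ≤ √s + √√s * a + √c * a ^ 2 := by
  have h_mid : √(a ^ 2 * √s) = √√s * a := by
    rw [Real.sqrt_mul' _ (Real.sqrt_nonneg s), Real.sqrt_sq ha, mul_comm]
  have h_last : √(c * a ^ 4) = √c * a ^ 2 := by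
    rw [Real.sqrt_mul' _ (by positivity), show a ^ 4 = (a ^ 2) ^ 2 by ring,
      Real.sqrt_sq (sq_nonneg a)]
  calc √(s + a ^ 2 * √s + c * a ^ 4)
      ≤ √(s + a ^ 2 * √s) + √(c * a ^ 4) := Real.sqrt_add_le_add_sqrt _ _
    _ ≤ √s + √(a ^ 2 * √s) + √(c * a ^ 4) := by gcongr; exact Real.sqrt_add_le_add_sqrt _ _
    _ = √s + √√s * a + √c * a ^ 2 := by rw [h_mid, h_last]

lemma Asymptotics.isBigO_of_le_add_mul_self {α : Type*} {l : Filter α} {a b e : α → ℝ} (p : ℝ)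
    (ha : ∀ᶠ x in l, 0 ≤ a x) (he : Tendsto e l (𝓝 0))
    (h : ∀ᶠ x in l, a x ≤ p * b x + e x * a x) : a =O[l] b := by
  refine Asymptotics.IsBigO.of_bound (2 * |p|) ?_
  filter_upwards [ha, h, he.eventually (gt_mem_nhds one_half_pos)] with x hax hx hex
  have h_absorb : a x ≤ 2 * (p * b x) := by nlinarith
  calc ‖a x‖ = a x := Real.norm_of_nonneg hax
    _ ≤ 2 * (p * b x) := h_absorb
    _ ≤ 2 * |p * b x| := by gcongr; exact le_abs_self _
    _ = 2 * |p| * ‖b x‖ := by rw [abs_mul, Real.norm_eq_abs, mul_assoc]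

theorem self_bounding_rate_general (a : ℕ → ℝ) (c₁ c₂ c₃ C : ℝ)
    (hc₁ : 0 ≤ c₁)
    (hnn : ∀ L, 0 ≤ a L)
    (hbound : ∀ L : ℕ, 1 ≤ L →
      a L ≤ c₁ * Real.sqrt (C / (L : ℝ) + a L ^ 2 * Real.sqrt (C / (L : ℝ)) + c₂ * a L ^ 4)
        + c₃ * a L ^ 2)
    (hlim : Tendsto a atTop (nhds 0)) :
    (fun L : ℕ => a L) =O[atTop] (fun L : ℕ => Real.sqrt (C / (L : ℝ))) := by
  have h_rate : Tendsto (fun L : ℕ => √√(C / L)) atTop (𝓝 0) := by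
    simpa using (tendsto_const_div_atTop_nhds_zero_nat C).sqrt.sqrt
  refine Asymptotics.isBigO_of_le_add_mul_self c₁
    (e := fun L => c₁ * √√(C / L) + (c₁ * √c₂ + c₃) * a L) (Eventually.of_forall hnn)
    (by simpa using (h_rate.const_mul c₁).add (hlim.const_mul (c₁ * √c₂ + c₃))) ?_
  filter_upwards [eventually_ge_atTop 1] with L hL
  calc a L ≤ c₁ * √(C / L + a L ^ 2 * √(C / L) + c₂ * a L ^ 4) + c₃ * a L ^ 2 := hbound L hL
    _ ≤ c₁ * (√(C / L) + √√(C / L) * a L + √c₂ * a L ^ 2) + c₃ * a L ^ 2 := by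
      gcongr; exact Real.sqrt_add_sq_mul_sqrt_add_mul_pow_four_le (hnn L) _ _
    _ = c₁ * √(C / L) + (c₁ * √√(C / L) + (c₁ * √c₂ + c₃) * a L) * a L := by ring

/-- Self-bounding convergence rate: if a nonnegative sequence `a_L → 0` satisfies
`a_L ≤ c₁ √(C/L + a_L² √(C/L) + c₂ a_L⁴) + c₃ a_L²` for all `L ≥ 1`,
then `a_L = O(√(C/L))`. -/
theorem self_bounding_rate (a : ℕ → ℝ) (c₁ c₂ c₃ C : ℝ)
    (hc₁ : 0 ≤ c₁) (hc₂ : 0 ≤ c₂) (hc₃ : 0 ≤ c₃) (hC : 0 < C)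
    (hnn : ∀ L, 0 ≤ a L)
    (hbound : ∀ L : ℕ, 1 ≤ L →
      a L ≤ c₁ * Real.sqrt (C / (L : ℝ) + a L ^ 2 * Real.sqrt (C / (L : ℝ)) + c₂ * a L ^ 4)
        + c₃ * a L ^ 2)
    (hlim : Tendsto a atTop (nhds 0)) :
    (fun L : ℕ => a L) =O[atTop] (fun L : ℕ => Real.sqrt (C / (L : ℝ))) :=
  self_bounding_rate_general a c₁ c₂ c₃ C hc₁ hnn hbound hlim
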